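/- On the chain c₁ < ... < c₂ₙ with cᵢ ⊙ cⱼ := 0 if i + j ≤ 2n + 1 else c_{min(i,j)}, and cᵢ → cⱼ := 1 if i ≤ j else c_{max(2n+1−i, j)}, adjointness holds: cᵢ ⊙ cⱼ ≤ cₖ if and only if cᵢ ≤ cⱼ → cₖ. -/
import Mathlib


/-- The product on the chain c₁ < ... < c₂ₙ, on subscripts:
cᵢ ⊙ cⱼ = c₁ (= 0) if i + j ≤ 2n + 1, and c_{min(i,j)} otherwise. -/
def cdot (n i j : ℕ) : ℕ :=
  if i + j ≤ 2 * n + 1 then 1 else min i j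

/-- The residuum on the chain, on subscripts:
cᵢ → cⱼ = c₂ₙ (= 1) if i ≤ j, and c_{max(2n+1-i, j)} otherwise. -/
def cimp (n i j : ℕ) : ℕ :=
  if i ≤ j then 2 * n else max (2 * n + 1 - i) j

/-- Adjointness on the chain: cᵢ ⊙ cⱼ ≤ cₖ iff cᵢ ≤ cⱼ → cₖ. -/
theorem stmt17 (n : ℕ) (hn : 1 ≤ n) :
    ∀ i j k : ℕ, 1 ≤ i → i ≤ 2 * n → 1 ≤ j → j ≤ 2 * n → 1 ≤ k → k ≤ 2 * n →
      (cdot n i j ≤ k ↔ i ≤ cimp n j k) := by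
  intro i j k hi1 hi2 hj1 hj2 hk1 hk2
  unfold cdot cimp
  split <;> split <;> omega
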